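/- arXiv:1301.4946 — 2 statements merged into one kernel-verified Lean document; each statement's English description precedes it below -/
import Mathlib

section
/- Let G be a looped simple graph, S a subtransversal of W(G), and v a vertex with (v,φ),(v,χ),(v,ψ) ∉ S. Then the closure of S in M(IAS(G)) contains at most one of (v,φ), (v,χ), (v,ψ). -/
/-- The three column types of the matrix `IAS(G) = (I | A | I+A)`. -/
inductive GType : Type
  | phi | chi | psi
  deriving DecidableEq

instance : Fintype GType :=
  ⟨{GType.phi, GType.chi, GType.psi}, fun x => by cases x <;> simp⟩

/-- The column of `IAS(G) = (I | A(G) | I+A(G))` indexed by a ground set element of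
`W(G) = V × {φ, χ, ψ}`. -/
def iasCol {V : Type} [DecidableEq V] (A : Matrix V V (ZMod 2)) : V × GType → V → ZMod 2
  | (v, GType.phi) => fun w => if w = v then 1 else 0
  | (v, GType.chi) => fun w => A w v
  | (v, GType.psi) => fun w => (if w = v then 1 else 0) + A w v

/-- Independence in the binary matroid `M(IAS(G))`: a set of ground elements is independent
iff the corresponding columns of `IAS(G)` are linearly independent over `GF(2)`. -/
def IasIndep {V : Type} [DecidableEq V] (A : Matrix V V (ZMod 2))
    (S : Set (V × GType)) : Prop :=
  LinearIndependent (ZMod 2) (fun p : S => iasCol A p.1)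

/-- A circuit of `M(IAS(G))`: a minimal dependent set. -/
def IasCircuit {V : Type} [DecidableEq V] (A : Matrix V V (ZMod 2))
    (C : Set (V × GType)) : Prop :=
  ¬ IasIndep A C ∧ ∀ D : Set (V × GType), D ⊂ C → IasIndep A D

/-- The rank of a subset of the ground set of `M(IAS(G))`: the `GF(2)`-rank of the
corresponding set of columns of `IAS(G)`. -/
noncomputable def iasRk {V : Type} [Fintype V] [DecidableEq V] (A : Matrix V V (ZMod 2))
    (S : Set (V × GType)) : ℕ :=
  Module.finrank (ZMod 2) (Submodule.span (ZMod 2) (iasCol A '' S))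

/-!
If two of the three columns of the cell of `v` lie in the span of `S`, then so do `e_v` and
`A e_v`. A combination of columns of `S` has the form `x + A y`, where `(x_u, y_u)` is a
multiple of `(1,0)`, `(0,1)` or `(1,1)` according to which element of the cell of `u` lies in
`S`; so two such combinations satisfy `y₁ ⬝ x₂ = x₁ ⬝ y₂`. Writing `e_v = x₁ + A y₁` and
`A e_v = x₂ + A y₂`, where `x₁_v = y₂_v = 0` since the cell of `v` misses `S`, and pairing
the first with `y₂` and the second with `y₁`, the symmetry of `A` gives `y₁ ⬝ x₂ - x₁ ⬝ y₂ = 1`.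
-/

open Matrix Submodule Module

theorem Submodule.mem_span_of_finrank_span_insert_eq {K M : Type*} [DivisionRing K]
    [AddCommGroup M] [Module K M] [FiniteDimensional K M] {s : Set M} {x : M}
    (h : finrank K (span K (insert x s)) = finrank K (span K s)) : x ∈ span K s := by
  rw [eq_of_le_of_finrank_eq (span_mono (Set.subset_insert x s)) h.symm]
  exact subset_span (Set.mem_insert x s)

theorem Matrix.IsSymm.dotProduct_sub_dotProduct_eq_one {V R : Type*} [Fintype V] [DecidableEq V]
    [CommRing R] {A : Matrix V V R} (hA : A.IsSymm) {v : V} {x₁ y₁ x₂ y₂ : V → R}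
    (h₁ : Pi.single v 1 = x₁ + A *ᵥ y₁) (h₂ : A *ᵥ Pi.single v 1 = x₂ + A *ᵥ y₂)
    (hx₁ : x₁ v = 0) (hy₂ : y₂ v = 0) :
    y₁ ⬝ᵥ x₂ - x₁ ⬝ᵥ y₂ = 1 := by
  have hvecMul (y : V → R) : y ᵥ* A = A *ᵥ y := by rw [← vecMul_transpose, hA.eq]
  have e₁ : y₂ ⬝ᵥ x₁ + y₂ ⬝ᵥ A *ᵥ y₁ = 0 := by
    rw [← dotProduct_add, ← h₁, dotProduct_single, hy₂, zero_mul]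
  have e₂ : y₁ ⬝ᵥ x₂ + y₁ ⬝ᵥ A *ᵥ y₂ = 1 := by
    rw [← dotProduct_add, ← h₂, dotProduct_mulVec, dotProduct_single, hvecMul, mul_one,
      ← add_sub_cancel_left x₁ (A *ᵥ y₁), ← h₁]
    simp [hx₁]
  have e₃ : y₁ ⬝ᵥ A *ᵥ y₂ = y₂ ⬝ᵥ A *ᵥ y₁ := by
    rw [dotProduct_mulVec, hvecMul, dotProduct_comm]
  rw [dotProduct_comm x₁]
  linear_combination e₂ - e₁ - e₃

def IsSubtransversal {V : Type*} (S : Set (V × GType)) : Prop :=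
  ∀ (w : V) (ι κ : GType), (w, ι) ∈ S → (w, κ) ∈ S → ι = κ

def phiPart {V R : Type*} [Add R] (l : V × GType → R) (u : V) : R := l (u, .phi) + l (u, .psi)

def chiPart {V R : Type*} [Add R] (l : V × GType → R) (u : V) : R := l (u, .chi) + l (u, .psi)

theorem IsSubtransversal.chiPart_dotProduct_phiPart {V R : Type*} [Fintype V] [CommRing R]
    {S : Set (V × GType)} (hS : IsSubtransversal S) {l₁ l₂ : V × GType → R}
    (hl₁ : ∀ p ∉ S, l₁ p = 0) (hl₂ : ∀ p ∉ S, l₂ p = 0) :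
    chiPart l₁ ⬝ᵥ phiPart l₂ = phiPart l₁ ⬝ᵥ chiPart l₂ := by
  refine Finset.sum_congr rfl fun u _ => ?_
  have hcell (τ τ' : GType) (hne : τ ≠ τ') : l₁ (u, τ) * l₂ (u, τ') = 0 := by
    by_contra h
    refine hne (hS u τ τ' ?_ ?_)
    · exact not_imp_comm.mp (hl₁ _) (left_ne_zero_of_mul h)
    · exact not_imp_comm.mp (hl₂ _) (right_ne_zero_of_mul h)
  simp only [phiPart, chiPart]
  linear_combination hcell .chi .phi (by decide) + hcell .chi .psi (by decide)
    + hcell .psi .phi (by decide) - hcell .phi .chi (by decide)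
    - hcell .phi .psi (by decide) - hcell .psi .chi (by decide)

section Ias

variable {V : Type} [DecidableEq V] (A : Matrix V V (ZMod 2))

theorem iasCol_phi (v : V) : iasCol A (v, .phi) = Pi.single v 1 := by
  ext w; simp [iasCol, Pi.single_apply]

theorem iasCol_chi [Fintype V] (v : V) : iasCol A (v, .chi) = A *ᵥ Pi.single v 1 := by
  ext w; simp [iasCol]

theorem iasCol_psi (v : V) : iasCol A (v, .psi) = iasCol A (v, .phi) + iasCol A (v, .chi) :=
  rfl

theorem iasCol_mem_of_mem_of_mem {p : Submodule (ZMod 2) (V → ZMod 2)} {v : V} {ι κ : GType}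
    (hne : ι ≠ κ) (hι : iasCol A (v, ι) ∈ p) (hκ : iasCol A (v, κ) ∈ p) (τ : GType) :
    iasCol A (v, τ) ∈ p := by
  suffices iasCol A (v, .phi) ∈ p ∧ iasCol A (v, .chi) ∈ p by
    cases τ
    · exact this.1
    · exact this.2
    · exact iasCol_psi A v ▸ add_mem this.1 this.2
  cases ι <;> cases κ <;>
    simp_all [iasCol_psi, Submodule.add_mem_iff_left, Submodule.add_mem_iff_right]

theorem sum_smul_iasCol [Fintype V] (l : V × GType → ZMod 2) :
    ∑ p, l p • iasCol A p = phiPart l + A *ᵥ chiPart l := by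
  ext u
  have hcell (w : V) : ∑ τ, l (w, τ) * iasCol A (w, τ) u
      = (if u = w then 1 else 0) * phiPart l w + A u w * chiPart l w := by
    rw [show (Finset.univ : Finset GType) = {.phi, .chi, .psi} from rfl]
    by_cases h : u = w <;> simp [h, iasCol, phiPart, chiPart] <;> ring
  simp only [Finset.sum_apply, Pi.smul_apply, smul_eq_mul, Fintype.sum_prod_type, hcell,
    Finset.sum_add_distrib, ite_mul, one_mul, zero_mul, Finset.sum_ite_eq, Finset.mem_univ,
    if_true, Pi.add_apply, mulVec, dotProduct]

theorem exists_eq_phiPart_add_mulVec_chiPart [Fintype V] {S : Set (V × GType)} {t : V → ZMod 2}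
    (ht : t ∈ span (ZMod 2) (iasCol A '' S)) :
    ∃ l : V × GType → ZMod 2, (∀ p ∉ S, l p = 0) ∧ t = phiPart l + A *ᵥ chiPart l := by
  obtain ⟨l, hl, rfl⟩ := (Finsupp.mem_span_image_iff_linearCombination _).mp ht
  refine ⟨l, fun p hp => Finsupp.notMem_support_iff.mp fun h => hp (hl h), ?_⟩
  rw [Finsupp.linearCombination_apply, Finsupp.sum_fintype _ _ (by simp), sum_smul_iasCol]

theorem iasCol_mem_span_of_iasRk_insert_eq [Fintype V] {S : Set (V × GType)} {p : V × GType}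
    (h : iasRk A (insert p S) = iasRk A S) : iasCol A p ∈ span (ZMod 2) (iasCol A '' S) :=
  mem_span_of_finrank_span_insert_eq (by rwa [← Set.image_insert_eq])

end Ias

/-- the closure of a subtransversal `S` contains at most one of the three
elements `(v,φ), (v,χ), (v,ψ)` of a canonical cell disjoint from `S`.  (Here
`x ∈ cl(S)` iff `r(S ∪ {x}) = r(S)`.) -/
theorem closure_subtransversal {V : Type} [Fintype V] [DecidableEq V]
    (A : Matrix V V (ZMod 2)) (hA : A.IsSymm) (v : V) (S : Set (V × GType))
    (hsub : ∀ (w : V) (ι κ : GType), (w, ι) ∈ S → (w, κ) ∈ S → ι = κ)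
    (hvS : ∀ ι : GType, (v, ι) ∉ S) :
    ∀ ι κ : GType, ι ≠ κ →
      iasRk A (insert (v, ι) S) = iasRk A S →
      iasRk A (insert (v, κ) S) ≠ iasRk A S := by
  intro ι κ hne hι hκ
  have hspan := iasCol_mem_of_mem_of_mem A hne (iasCol_mem_span_of_iasRk_insert_eq A hι)
    (iasCol_mem_span_of_iasRk_insert_eq A hκ)
  obtain ⟨l₁, hl₁, h₁⟩ := exists_eq_phiPart_add_mulVec_chiPart A (hspan .phi)
  obtain ⟨l₂, hl₂, h₂⟩ := exists_eq_phiPart_add_mulVec_chiPart A (hspan .chi)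
  rw [iasCol_phi] at h₁
  rw [iasCol_chi] at h₂
  have hv (l : V × GType → ZMod 2) (hl : ∀ p ∉ S, l p = 0) :
      phiPart l v = 0 ∧ chiPart l v = 0 := by
    simp [phiPart, chiPart, hl _ (hvS _)]
  have h := hA.dotProduct_sub_dotProduct_eq_one h₁ h₂ (hv l₁ hl₁).1 (hv l₂ hl₂).2
  rw [IsSubtransversal.chiPart_dotProduct_phiPart hsub hl₁ hl₂, sub_self] at h
  exact zero_ne_one h
end

section
/- Let G be a looped simple graph with adjacency matrix A over GF(2). Then the two-variable interlace polynomial q(G)(x,y) = Σ_{S ⊆ V(G)} (x−1)^{rank A[S]} (y−1)^{|S| − rank A[S]} satisfies q(G)(x,y) = Σ_{T} (x−1)^{|S(T)|} (y−1)^{|V(G)| − r(T)} (x−1)^{r(T) − |V(G)|}, where T ranges over transversals of W(G) avoiding all ψ-elements, S(T) = {v : (v,χ)∈T}, and r(T) is the GF(2)-rank of the columns of IAS(G) indexed by T; equivalently q(G) is obtained from the section of the parametrized rank polynomial of M(IAS(G)) over transversals by the substitution a(v,φ)=1, a(v,χ)=x−1, a(v,ψ)=0, all b≡1, s=y−1,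 z=1/(x−1). The key identity is: for every S ⊆ V(G), |V(G)| − r(T_S) = |S| − rank A[S] where T_S = {(v,χ):v∈S} ∪ {(v,φ):v∉S}. -/
/-- The transversal `T_S = {(v,χ) : v ∈ S} ∪ {(v,φ) : v ∉ S}` of `W(G)` (a transversal
with no `ψ`-elements; every ψ-free transversal is of this form, with `S = S(T)`). -/
def chiPhiTransversal {V : Type} (S : Finset V) : Set (V × GType) :=
  {p | (p.2 = GType.chi ∧ p.1 ∈ S) ∨ (p.2 = GType.phi ∧ p.1 ∉ S)}

/-- The rank of the principal submatrix `A[S]` over `GF(2)`. -/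
noncomputable def principalRank {V : Type} [Fintype V] [DecidableEq V]
    (A : Matrix V V (ZMod 2)) (S : Finset V) : ℕ :=
  (A.submatrix (fun a : {a : V // a ∈ S} => a.val)
    (fun a : {a : V // a ∈ S} => a.val)).rank

/-!
The columns indexed by `T_S` are the columns `A e_v` for `v ∈ S` and the unit vectors `e_v` for
`v ∉ S`. Restricting vectors to the coordinates in `S` kills exactly the span of the `e_v` with
`v ∉ S`, which lies in the span of these columns, and maps the `A`-columns onto the columns of
`A[S]`. Rank–nullity therefore gives `r(T_S) = rank A[S] + |V| − |S|`, and the two sums agree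
term by term.
-/

open Module

theorem Submodule.finrank_eq_finrank_map_add_finrank_ker {K M N : Type*} [DivisionRing K]
    [AddCommGroup M] [Module K M] [AddCommGroup N] [Module K N] [FiniteDimensional K M]
    (f : M →ₗ[K] N) {T : Submodule K M} (h : LinearMap.ker f ≤ T) :
    finrank K T = finrank K (T.map f) + finrank K (LinearMap.ker f) := by
  rw [← (f.domRestrict T).finrank_range_add_finrank_ker, LinearMap.range_domRestrict,
    LinearMap.ker_domRestrict, (Submodule.comapSubtypeEquivOfLe h).finrank_eq]

theorem finrank_ker_funLeft_subtype_add_card {K V : Type*} [DivisionRing K] [Fintype V]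
    (S : Finset V) :
    finrank K (LinearMap.ker (LinearMap.funLeft K K ((↑) : S → V))) + S.card =
      Fintype.card V := by
  have hsurj := LinearMap.funLeft_surjective_of_injective K K ((↑) : S → V) Subtype.val_injective
  have := (LinearMap.funLeft K K ((↑) : S → V)).finrank_range_add_finrank_ker
  rw [LinearMap.range_eq_top.mpr hsurj, finrank_top, finrank_fintype_fun_eq_card,
    finrank_fintype_fun_eq_card, Fintype.card_coe] at this
  omega

section Transversal

variable {V : Type} [DecidableEq V] (A : Matrix V V (ZMod 2))

local notation "π" S => LinearMap.funLeft (ZMod 2) (ZMod 2) ((↑) : S → V)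

theorem ker_restrict_le_span_chiPhiTransversal [Fintype V] (S : Finset V) :
    LinearMap.ker (π S) ≤ Submodule.span (ZMod 2) (iasCol A '' chiPhiTransversal S) := by
  intro f hf
  rw [← Finset.univ_sum_single f]
  refine Submodule.sum_mem _ fun v _ => ?_
  by_cases hv : v ∈ S
  · have : f v = 0 := congrFun (LinearMap.mem_ker.mp hf) ⟨v, hv⟩
    simp [this]
  · have hcol : Pi.single v (f v) = f v • iasCol A (v, GType.phi) := by
      funext w; simp [iasCol, Pi.single_apply]
    rw [hcol]
    exact Submodule.smul_mem _ _ (Submodule.subset_span ⟨(v, .phi), Or.inr ⟨rfl, hv⟩, rfl⟩)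

theorem map_restrict_span_chiPhiTransversal (S : Finset V) :
    (Submodule.span (ZMod 2) (iasCol A '' chiPhiTransversal S)).map (π S) =
      Submodule.span (ZMod 2) (Set.range (A.submatrix ((↑) : S → V) ((↑) : S → V)).col) := by
  rw [Submodule.map_span, Set.image_image]
  apply le_antisymm <;> rw [Submodule.span_le]
  · rintro _ ⟨⟨v, t⟩, ⟨rfl, hv⟩ | ⟨rfl, hv⟩, rfl⟩
    · exact Submodule.subset_span ⟨⟨v, hv⟩, by funext w; simp [iasCol]⟩
    · have : (π S) (iasCol A (v, .phi)) = 0 := by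
        funext w
        simp [iasCol, LinearMap.funLeft_apply, ne_of_mem_of_not_mem w.2 hv]
      simp [this]
  · rintro _ ⟨w, rfl⟩
    exact Submodule.subset_span ⟨(w, .chi), Or.inl ⟨rfl, w.2⟩, by funext u; simp [iasCol]⟩

theorem iasRk_chiPhiTransversal_add_card [Fintype V] (S : Finset V) :
    iasRk A (chiPhiTransversal S) + S.card = Fintype.card V + principalRank A S := by
  have hdim := Submodule.finrank_eq_finrank_map_add_finrank_ker (π S)
    (ker_restrict_le_span_chiPhiTransversal A S)
  rw [map_restrict_span_chiPhiTransversal, ← Matrix.rank_eq_finrank_span_cols] at hdim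
  have hker := finrank_ker_funLeft_subtype_add_card (K := ZMod 2) S
  have hrank : principalRank A S = (A.submatrix ((↑) : S → V) ((↑) : S → V)).rank := rfl
  rw [iasRk, hdim, hrank]
  omega

end Transversal

theorem pow_mul_pow_eq_pow_mul_pow_mul_zpow {G : Type*} [CommGroupWithZero G] {u : G}
    (hu : u ≠ 0) (w : G) {r s n p : ℕ} (h : r + s = n + p) (hp : p ≤ s) :
    u ^ p * w ^ (s - p) = u ^ s * w ^ (n - r) * u ^ ((r : ℤ) - n) := by
  rw [show n - r = s - p by omega, mul_right_comm, ← zpow_natCast u s, ← zpow_add₀ hu,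
    ← zpow_natCast u p]
  congr 2
  omega

theorem interlace_from_parametrized_tutte_general {V : Type} [Fintype V] [DecidableEq V]
    {K : Type} [Field K] (A : Matrix V V (ZMod 2))
    (x y : K) (hx : x ≠ 1) :
    (∀ S : Finset V,
      iasRk A (chiPhiTransversal S) + S.card =
        Fintype.card V + principalRank A S) ∧
    (∑ S : Finset V,
        (x - 1) ^ principalRank A S * (y - 1) ^ (S.card - principalRank A S) =
      ∑ S : Finset V,
        (x - 1) ^ S.card *
          (y - 1) ^ (Fintype.card V - iasRk A (chiPhiTransversal S)) *
          (x - 1) ^ ((iasRk A (chiPhiTransversal S) : ℤ) - (Fintype.card V : ℤ))) := by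
  refine ⟨iasRk_chiPhiTransversal_add_card A, Finset.sum_congr rfl fun S _ => ?_⟩
  have hrank : principalRank A S ≤ S.card :=
    (Matrix.rank_le_card_width _).trans_eq (Fintype.card_coe S)
  exact pow_mul_pow_eq_pow_mul_pow_mul_zpow (sub_ne_zero.mpr hx) (y - 1)
    (iasRk_chiPhiTransversal_add_card A S) hrank

/-- the key identity `|V| − r(T_S) = |S| − rank A[S]` (stated additively:
`r(T_S) + |S| = |V| + rank A[S]`), and the resulting expression of the two-variable
interlace polynomial `q(G)(x,y) = Σ_S (x−1)^{rank A[S]} (y−1)^{|S|−rank A[S]}` as the sum,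
over ψ-free transversals `T = T_S` of `W(G)`, of
`(x−1)^{|S(T)|} (y−1)^{|V|−r(T)} (x−1)^{r(T)−|V|}` (the transversal section of the
parametrized rank polynomial of `M(IAS(G))` with `a(v,φ)=1`, `a(v,χ)=x−1`, `a(v,ψ)=0`,
`b≡1`, `s=y−1`, `z=1/(x−1)`). -/
theorem interlace_from_parametrized_tutte {V : Type} [Fintype V] [DecidableEq V]
    {K : Type} [Field K] (A : Matrix V V (ZMod 2)) (hA : A.IsSymm)
    (x y : K) (hx : x ≠ 1) :
    (∀ S : Finset V,
      iasRk A (chiPhiTransversal S) + S.card =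
        Fintype.card V + principalRank A S) ∧
    (∑ S : Finset V,
        (x - 1) ^ principalRank A S * (y - 1) ^ (S.card - principalRank A S) =
      ∑ S : Finset V,
        (x - 1) ^ S.card *
          (y - 1) ^ (Fintype.card V - iasRk A (chiPhiTransversal S)) *
          (x - 1) ^ ((iasRk A (chiPhiTransversal S) : ℤ) - (Fintype.card V : ℤ))) :=
  interlace_from_parametrized_tutte_general A x y hx
end
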